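/- arXiv:1004.0951 — 2 statements merged into one kernel-verified Lean document; each statement's English description precedes it below -/
import Mathlib

section
/- Conversely, if A_1,...,A_n and A'_1,...,A'_n are sets of m×m complex matrices such that each set is linearly independent and Σ_j A'_j ρ A'_j† = Σ_i A_i ρ A_i† for all m×m matrices ρ, then there exists an n×n unitary matrix u with A'_j = Σ_i u_{ji} A_i. -/
/-!
Flatten each `A i` into the `i`-th row of a matrix `M` (and `A' j` into a row of `M'`).
Evaluating both maps at the matrix units shows `M'ᴴ * M' = Mᴴ * M`. Since `Xᴴ * X = 0` forces
`X = 0`, this gives `M * X = 0 → M' * X = 0`; so if `R` is a right inverse of `M` (it exists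
because the rows of `M` are independent), `u := M' * R` satisfies `u * M = M'`, and
`uᴴ * u = (M * R)ᴴ * (M * R) = 1`.
-/

open Matrix

namespace Matrix

section Gram

variable {ι κ ο R : Type*} [Fintype ι] [Fintype κ] [NonUnitalRing R] [StarRing R]

lemma conjTranspose_mul_self_mul_eq {M M' : Matrix ι κ R} (h : M'ᴴ * M' = Mᴴ * M)
    (X : Matrix κ ο R) : (M' * X)ᴴ * (M' * X) = (M * X)ᴴ * (M * X) := by
  calc (M' * X)ᴴ * (M' * X) = Xᴴ * (M'ᴴ * M') * X := by
        simp only [conjTranspose_mul, Matrix.mul_assoc]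
    _ = (M * X)ᴴ * (M * X) := by
        simp only [h, conjTranspose_mul, Matrix.mul_assoc]

lemma mul_eq_zero_of_conjTranspose_mul_self_eq [PartialOrder R] [StarOrderedRing R]
    [NoZeroDivisors R] {M M' : Matrix ι κ R} (h : M'ᴴ * M' = Mᴴ * M) {X : Matrix κ ο R}
    (hX : M * X = 0) : M' * X = 0 := by
  rw [← conjTranspose_mul_self_eq_zero, conjTranspose_mul_self_mul_eq h, hX, Matrix.mul_zero]

end Gram

variable {ι κ K : Type*} [Fintype ι] [Fintype κ] [DecidableEq ι] [Field K]

lemma exists_mul_eq_one_of_linearIndependent_row {M : Matrix ι κ K}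
    (hM : LinearIndependent K M.row) : ∃ R : Matrix κ ι K, M * R = 1 := by
  rw [← mulVec_surjective_iff_exists_right_inverse, ← coe_mulVecLin, ← LinearMap.range_eq_top]
  apply Submodule.eq_top_of_finrank_eq
  rw [Module.finrank_fintype_fun_eq_card, ← hM.rank_matrix]
  rfl

theorem exists_mem_unitaryGroup_eq_mul_of_conjTranspose_mul_self_eq [StarRing K]
    [PartialOrder K] [StarOrderedRing K] {M M' : Matrix ι κ K}
    (hM : LinearIndependent K M.row) (h : M'ᴴ * M' = Mᴴ * M) :
    ∃ u ∈ unitaryGroup ι K, M' = u * M := by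
  classical
  obtain ⟨R, hR⟩ := exists_mul_eq_one_of_linearIndependent_row hM
  refine ⟨M' * R, ?_, ?_⟩
  · rw [mem_unitaryGroup_iff', star_eq_conjTranspose, conjTranspose_mul_self_mul_eq h, hR,
      conjTranspose_one, Matrix.one_mul]
  · have hRM : M * (R * M - 1) = 0 := by
      rw [Matrix.mul_sub, ← Matrix.mul_assoc, hR, Matrix.one_mul, Matrix.mul_one, sub_self]
    have := mul_eq_zero_of_conjTranspose_mul_self_eq h hRM
    rw [Matrix.mul_sub, Matrix.mul_one, sub_eq_zero] at this
    rw [Matrix.mul_assoc, this]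

lemma sum_mul_single_mul_conjTranspose_apply {ι m n α : Type*} [Fintype ι] [Fintype n]
    [DecidableEq n] [Semiring α] [StarRing α] (A : ι → Matrix m n α) (a c : m) (b d : n) :
    (∑ i, A i * single b d (1 : α) * (A i)ᴴ) a c = ∑ i, A i a b * star (A i c d) := by
  simp [sum_apply, mul_apply, single, ite_and]

end Matrix

theorem unitary_freedom_of_same_map_general {m n : ℕ} (A A' : Fin n → Matrix (Fin m) (Fin m) ℂ)
    (hA : LinearIndependent ℂ A)
    (hmap : ∀ ρ : Matrix (Fin m) (Fin m) ℂ,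
      ∑ j, A' j * ρ * (A' j)ᴴ = ∑ i, A i * ρ * (A i)ᴴ) :
    ∃ u ∈ Matrix.unitaryGroup (Fin n) ℂ, ∀ j, A' j = ∑ i, u j i • A i := by
  let e : Matrix (Fin m) (Fin m) ℂ ≃ₗ[ℂ] (Fin m × Fin m → ℂ) :=
    (ofLinearEquiv ℂ).symm ≪≫ₗ (LinearEquiv.curry ℂ ℂ _ _).symm
  let M : Matrix (Fin n) (Fin m × Fin m) ℂ := of fun i ↦ e (A i)
  let M' : Matrix (Fin n) (Fin m × Fin m) ℂ := of fun j ↦ e (A' j)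
  have hM : LinearIndependent ℂ M.row := hA.map' e.toLinearMap e.ker
  have hGram : M'ᴴ * M' = Mᴴ * M := by
    ext ⟨a, b⟩ ⟨c, d⟩
    have := congr_fun₂ (hmap (single d b 1)) c a
    simp only [sum_mul_single_mul_conjTranspose_apply] at this
    simpa [M, M', mul_apply, e, mul_comm] using this
  open scoped ComplexOrder in
  obtain ⟨u, hu, hM'⟩ := exists_mem_unitaryGroup_eq_mul_of_conjTranspose_mul_self_eq hM hGram
  refine ⟨u, hu, fun j ↦ e.injective ?_⟩
  ext ⟨a, b⟩
  have := congr_fun₂ hM' j (a, b)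
  simp only [M, M', mul_apply, of_apply] at this
  simpa [e, Finset.sum_apply] using this

theorem unitary_freedom_of_same_map {m n : ℕ} (A A' : Fin n → Matrix (Fin m) (Fin m) ℂ)
    (hA : LinearIndependent ℂ A) (hA' : LinearIndependent ℂ A')
    (hmap : ∀ ρ : Matrix (Fin m) (Fin m) ℂ,
      ∑ j, A' j * ρ * (A' j)ᴴ = ∑ i, A i * ρ * (A i)ᴴ) :
    ∃ u ∈ Matrix.unitaryGroup (Fin n) ℂ, ∀ j, A' j = ∑ i, u j i • A i :=
  unitary_freedom_of_same_map_general A A' hA hmap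
end

section
/- If two families of n×n matrices {C_i} and {D_j} (each with N elements and signs η_k, first p equal +1, last q equal -1) give rise to the same superoperator Σ_k η_k vec(C_k)vec(C_k)† = Σ_k η_k vec(D_k)vec(D_k)†, and the vec(C_k) are linearly independent, then there exists u with u†ηu = η such that vec(D_j) = Σ_i u_{ji} vec(C_i). -/
/-!
Stack the vectors `vec (C k)` and `vec (D k)` as the rows of matrices `C` and `D`; the hypothesis
then says `Cᴴ η C = Dᴴ η D`. Independent rows give a right inverse `B` of `C`; with `u := D B`,
multiplying the identity by `Bᴴ` on the left gives `η C = uᴴ η D`, and then by `B` on the right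
`uᴴ η u = η`. So `u` is invertible with inverse `η⁻¹ uᴴ η`, and
`D = u (η⁻¹ uᴴ η) D = u η⁻¹ η C = u C`.
-/

open Matrix

/-- The signature matrix `diag(1,…,1,-1,…,-1)` with `p` entries `+1` and `q` entries `-1`. -/
def signatureMatrix (p q : ℕ) : Matrix (Fin (p + q)) (Fin (p + q)) ℂ :=
  Matrix.diagonal (fun k => if (k : ℕ) < p then 1 else -1)

/-- The signs `η_k = +1` for `k ≤ p` and `η_k = -1` for `k > p`. -/
def signs (p q : ℕ) (k : Fin (p + q)) : ℂ := if (k : ℕ) < p then 1 else -1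

/-- Vectorization of an `n × n` matrix into `ℂ^(n²)`. -/
def vec {n : ℕ} (M : Matrix (Fin n) (Fin n) ℂ) : Fin n × Fin n → ℂ :=
  fun p => M p.1 p.2

namespace Matrix

variable {m n R : Type*}

theorem exists_mul_eq_one_of_linearIndependent_row_s16 {K : Type*} [Field K] [Fintype m]
    [DecidableEq m] [Fintype n] {A : Matrix m n K} (h : LinearIndependent K A.row) :
    ∃ B : Matrix n m K, A * B = 1 := by
  rw [← mulVec_surjective_iff_exists_right_inverse, ← coe_mulVecLin, ← LinearMap.range_eq_top]
  apply Submodule.eq_top_of_finrank_eq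
  rw [← rank, h.rank_matrix, Module.finrank_fintype_fun_eq_card]

theorem sum_smul_vecMulVec_star [Fintype m] [DecidableEq m] [CommSemiring R] [StarRing R]
    (η : m → R) (c : m → n → R) :
    ∑ k, η k • vecMulVec (c k) (star (c k)) = ((of c : Matrix m n R)ᴴ * diagonal η * of c)ᵀ := by
  ext a b
  rw [transpose_apply, mul_apply]
  simp only [sum_apply, smul_apply, vecMulVec_apply, Pi.star_apply, smul_eq_mul, mul_diagonal,
    conjTranspose_apply, of_apply]
  exact Finset.sum_congr rfl fun k _ => by ring

theorem exists_eq_mul_of_conjTranspose_mul_mul_eq [Fintype m] [DecidableEq m] [Fintype n]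
    [CommRing R] [StarRing R] {η : Matrix m m R} [Invertible η] {C D : Matrix m n R}
    (hC : ∃ B : Matrix n m R, C * B = 1) (h : Cᴴ * η * C = Dᴴ * η * D) :
    ∃ u : Matrix m m R, uᴴ * η * u = η ∧ D = u * C := by
  obtain ⟨B, hB⟩ := hC
  set u := D * B
  have hηC : η * C = uᴴ * η * D :=
    calc η * C = (C * B)ᴴ * η * C := by rw [hB, conjTranspose_one, Matrix.one_mul]
      _ = Bᴴ * (Cᴴ * η * C) := by simp only [conjTranspose_mul, Matrix.mul_assoc]
      _ = uᴴ * η * D := by simp only [h, u, conjTranspose_mul, Matrix.mul_assoc]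
  have hu : uᴴ * η * u = η :=
    calc uᴴ * η * u = η * C * B := by rw [hηC, Matrix.mul_assoc _ D B]
      _ = η := by rw [Matrix.mul_assoc, hB, Matrix.mul_one]
  have hinv : u * (⅟η * uᴴ * η) = 1 := by
    rw [mul_eq_one_comm, Matrix.mul_assoc, Matrix.mul_assoc, ← Matrix.mul_assoc uᴴ, hu,
      invOf_mul_self]
  refine ⟨u, hu, ?_⟩
  calc D = u * (⅟η * uᴴ * η) * D := by rw [hinv, Matrix.one_mul]
    _ = u * ⅟η * (η * C) := by simp only [hηC, Matrix.mul_assoc]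
    _ = u * C := by rw [Matrix.mul_assoc, ← Matrix.mul_assoc ⅟η, invOf_mul_self, Matrix.one_mul]

end Matrix

theorem signatureMatrix_eq_diagonal_signs (p q : ℕ) :
    signatureMatrix p q = diagonal (signs p q) :=
  rfl

theorem signatureMatrix_mul_self (p q : ℕ) : signatureMatrix p q * signatureMatrix p q = 1 := by
  rw [signatureMatrix, diagonal_mul_diagonal, ← diagonal_one]
  congr 1
  funext k
  split_ifs <;> norm_num

instance invertibleSignatureMatrix (p q : ℕ) : Invertible (signatureMatrix p q) :=
  ⟨_, signatureMatrix_mul_self p q, signatureMatrix_mul_self p q⟩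

theorem pseudo_unitary_freedom_of_same_B {n p q : ℕ}
    (C D : Fin (p + q) → Matrix (Fin n) (Fin n) ℂ)
    (hind : LinearIndependent ℂ (fun k => _root_.vec (C k)))
    (hB : ∑ k, signs p q k • vecMulVec (_root_.vec (C k)) (star (_root_.vec (C k)))
        = ∑ k, signs p q k • vecMulVec (_root_.vec (D k)) (star (_root_.vec (D k)))) :
    ∃ u : Matrix (Fin (p + q)) (Fin (p + q)) ℂ,
      uᴴ * signatureMatrix p q * u = signatureMatrix p q ∧
      ∀ j, _root_.vec (D j) = ∑ i, u j i • _root_.vec (C i) := by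
  set c : Matrix (Fin (p + q)) (Fin n × Fin n) ℂ := of fun k => _root_.vec (C k)
  set d : Matrix (Fin (p + q)) (Fin n × Fin n) ℂ := of fun k => _root_.vec (D k)
  have hform : cᴴ * signatureMatrix p q * c = dᴴ * signatureMatrix p q * d := by
    rw [← transpose_inj, signatureMatrix_eq_diagonal_signs, ← sum_smul_vecMulVec_star,
      ← sum_smul_vecMulVec_star]
    exact hB
  obtain ⟨u, hu, hDC⟩ := exists_eq_mul_of_conjTranspose_mul_mul_eq
    (exists_mul_eq_one_of_linearIndependent_row_s16 hind) hform
  exact ⟨u, hu, fun j => (congrFun hDC j).trans (vecMul_eq_sum (u j) _)⟩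
end
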